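/- arXiv:2605.31546 — 4 statements merged into one kernel-verified Lean document; each statement's English description precedes it below -/
import Mathlib

section
/- Let k ≥ 2, l ≥ 2, and n ≥ k + l − 3. There exists a family Q of subsets of [n] = {1,...,n}, partially ordered by inclusion, such that: (1) Q contains no chain of k sets; (2) every antichain in Q has size at most l − 1; and (3) |Q| = (k − 1)(l − 1). -/
/-!
With `a = l - 1` and `b = k - 1`, take the sets `{j} ∪ [a, a + i)` for `j < a`, `i < b`: they
form a copy of the product of an `a`-element antichain and a `b`-element chain, and they fit in
`[n]` because `a + b - 1 ≤ n`. The sets of a fixed size form an antichain, so a chain meets each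
of the `b` size classes at most once; the sets with a fixed `j` form a chain, so an antichain
meets each of these `a` classes at most once.
-/

open Finset

theorem Finset.card_le_of_forall_subsingleton_inter {α ι : Type*} [Fintype ι] {X : Finset α}
    (P : ι → Set α) (hcover : ∀ x ∈ X, ∃ i, x ∈ P i)
    (hmeet : ∀ i, ((X : Set α) ∩ P i).Subsingleton) : #X ≤ Fintype.card ι := by
  classical
  calc #X ≤ #(univ.biUnion fun i => X.filter (· ∈ P i)) :=
        card_le_card fun x hx => by simpa [hx] using hcover x hx
    _ ≤ ∑ i, #(X.filter (· ∈ P i)) := card_biUnion_le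
    _ ≤ ∑ _i : ι, 1 := sum_le_sum fun i _ =>
        card_le_one_iff_subsingleton.2 (by rw [coe_filter]; exact hmeet i)
    _ = Fintype.card ι := by simp

def gridSet (n a j i : ℕ) : Finset (Fin n) :=
  univ.filter fun x => x.val = j ∨ (a ≤ x.val ∧ x.val < a + i)

theorem map_valEmbedding_gridSet {n a j i : ℕ} (hj : j < a) (hi : a + i ≤ n) :
    (gridSet n a j i).map Fin.valEmbedding = insert j (Ico a (a + i)) := by
  ext m
  simp only [gridSet, mem_map, mem_filter, mem_univ, true_and, Fin.valEmbedding_apply,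
    mem_insert, mem_Ico]
  constructor
  · rintro ⟨x, hx, rfl⟩; exact hx
  · intro hm; exact ⟨⟨m, by omega⟩, hm, rfl⟩

theorem card_gridSet {n a j i : ℕ} (hj : j < a) (hi : a + i ≤ n) :
    #(gridSet n a j i) = i + 1 := by
  rw [← card_map Fin.valEmbedding, map_valEmbedding_gridSet hj hi,
    card_insert_of_notMem (by simp [hj]), Nat.card_Ico, Nat.add_sub_cancel_left]

theorem gridSet_mono (n a j : ℕ) : Monotone (gridSet n a j) := by
  intro i i' h x
  simp only [gridSet, mem_filter, mem_univ, true_and]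
  omega

theorem gridSet_injective {n a b : ℕ} (hn : a + b ≤ n + 1) :
    Function.Injective fun p : Fin a × Fin b => gridSet n a p.1 p.2 := by
  rintro ⟨j, i⟩ ⟨j', i'⟩ h
  simp only at h
  have hi : (i : ℕ) = i' := by
    have := congrArg card h
    rwa [card_gridSet j.2 (by omega), card_gridSet j'.2 (by omega),
      Nat.add_right_cancel_iff] at this
  have hj : (j : ℕ) = j' := by
    have : (⟨j, by omega⟩ : Fin n) ∈ gridSet n a j' i' := h ▸ by simp [gridSet]
    simp only [gridSet, mem_filter, mem_univ, true_and] at this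
    omega
  ext <;> assumption

def gridFamily (n a b : ℕ) : Finset (Finset (Fin n)) :=
  univ.image fun p : Fin a × Fin b => gridSet n a p.1 p.2

theorem mem_gridFamily {n a b : ℕ} {S : Finset (Fin n)} :
    S ∈ gridFamily n a b ↔ ∃ (j : Fin a) (i : Fin b), gridSet n a j i = S := by
  simp [gridFamily]

theorem card_gridFamily {n a b : ℕ} (hn : a + b ≤ n + 1) : #(gridFamily n a b) = a * b := by
  rw [gridFamily, card_image_of_injective _ (gridSet_injective hn), card_univ,
    Fintype.card_prod, Fintype.card_fin, Fintype.card_fin]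

theorem card_le_of_isChain_of_subset_gridFamily {n a b : ℕ} (hn : a + b ≤ n + 1)
    {C : Finset (Finset (Fin n))} (hC : C ⊆ gridFamily n a b)
    (hchain : IsChain (· ⊆ ·) (C : Set (Finset (Fin n)))) : #C ≤ b := by
  simpa using card_le_of_forall_subsingleton_inter (X := C)
    (fun m : Fin b => {S : Finset (Fin n) | #S = m + 1})
    (fun S hS => by
      obtain ⟨j, i, rfl⟩ := mem_gridFamily.1 (hC hS)
      exact ⟨i, card_gridSet j.2 (by omega)⟩)
    (fun m => inter_subsingleton_of_isChain_of_isAntichain hchain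
      (Set.Sized.isAntichain fun _ h => h))

theorem card_le_of_isAntichain_of_subset_gridFamily {n a b : ℕ}
    {A : Finset (Finset (Fin n))} (hA : A ⊆ gridFamily n a b)
    (hanti : IsAntichain (· ⊆ ·) (A : Set (Finset (Fin n)))) : #A ≤ a := by
  simpa using card_le_of_forall_subsingleton_inter (X := A)
    (fun j : Fin a => Set.range (gridSet n a j))
    (fun S hS => by
      obtain ⟨j, i, rfl⟩ := mem_gridFamily.1 (hA hS)
      exact ⟨j, i, rfl⟩)
    (fun j => inter_subsingleton_of_isAntichain_of_isChain hanti
      (gridSet_mono n a j).isChain_range)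

theorem stmt4 (k l n : ℕ) (hk : 2 ≤ k) (hl : 2 ≤ l) (hn : k + l - 3 ≤ n) :
    ∃ Q : Finset (Finset (Fin n)),
      (∀ C ⊆ Q, IsChain (· ⊆ ·) (C : Set (Finset (Fin n))) → C.card < k) ∧
      (∀ A ⊆ Q, IsAntichain (· ⊆ ·) (A : Set (Finset (Fin n))) → A.card ≤ l - 1) ∧
      Q.card = (k - 1) * (l - 1) := by
  have hab : (l - 1) + (k - 1) ≤ n + 1 := by omega
  refine ⟨gridFamily n (l - 1) (k - 1), fun C hC hchain => ?_,
    fun A hA hanti => card_le_of_isAntichain_of_subset_gridFamily hA hanti, ?_⟩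
  · have := card_le_of_isChain_of_subset_gridFamily hab hC hchain
    omega
  · rw [card_gridFamily hab, Nat.mul_comm]
end

section
/- For k ≥ 2, l ≥ 2, n ≥ k + l − 3, the maximum size of a family Q ⊆ 2^{[n]} (ordered by inclusion) that contains no chain of k sets and whose largest antichain has fewer than l elements equals (k − 1)(l − 1). -/
def ht {α : Type*} [DecidableEq α] (Q : Finset (Finset α)) (s : Finset α) : ℕ :=
  ((Q.filter (· ⊂ s)).attach.sup fun t => ht Q t.1) + 1
termination_by s.card
decreasing_by
  exact Finset.card_lt_card (Finset.mem_filter.mp t.2).2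

lemma ht_lt {α : Type*} [DecidableEq α] (Q : Finset (Finset α)) {s t : Finset α}
    (htQ : t ∈ Q) (hts : t ⊂ s) : ht Q t < ht Q s := by
  conv_rhs => rw [ht]
  have : t ∈ Q.filter (· ⊂ s) := Finset.mem_filter.mpr ⟨htQ, hts⟩
  have := Finset.le_sup (f := fun t : {x // x ∈ Q.filter (· ⊂ s)} => ht Q t.1)
    (Finset.mem_attach _ ⟨t, this⟩)
  exact Nat.lt_succ_of_le this

lemma ht_pos {α : Type*} [DecidableEq α] (Q : Finset (Finset α)) (s : Finset α) :
    1 ≤ ht Q s := by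
  rw [ht]; omega

lemma ht_chain {α : Type*} [DecidableEq α] (Q : Finset (Finset α)) :
    ∀ s, s ∈ Q → ∃ C ⊆ Q, IsChain (· ⊆ ·) (C : Set (Finset α)) ∧ s ∈ C ∧
      (∀ t ∈ C, t ⊆ s) ∧ C.card = ht Q s := by
  intro s
  induction s using Finset.strongInduction with
  | _ s ih =>
    intro hs
    by_cases hF : (Q.filter (· ⊂ s)).Nonempty
    · obtain ⟨t, htF, hsup⟩ := Finset.exists_mem_eq_sup
        (Q.filter (· ⊂ s)).attach (hF.attach) (fun t => ht Q t.1)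
      obtain ⟨htQ, hts⟩ := Finset.mem_filter.mp t.2
      obtain ⟨C', hC'Q, hC'chain, htC', hC'sub, hC'card⟩ := ih t.1 hts htQ
      have hsC' : s ∉ C' := fun h => (hts.not_subset) (hC'sub s h) |>.elim
      refine ⟨insert s C', ?_, ?_, Finset.mem_insert_self _ _, ?_, ?_⟩
      · intro x hx
        rcases Finset.mem_insert.mp hx with rfl | hx
        · exact hs
        · exact hC'Q hx
      · rw [Finset.coe_insert]
        exact hC'chain.insert (fun b hb _ => Or.inr ((hC'sub b hb).trans hts.subset))
      · intro x hx
        rcases Finset.mem_insert.mp hx with rfl | hx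
        · exact subset_rfl
        · exact (hC'sub x hx).trans hts.subset
      · rw [Finset.card_insert_of_notMem hsC', hC'card]
        conv_rhs => rw [ht]
        rw [hsup]
    · refine ⟨{s}, by simpa using hs,
        (by rw [Finset.coe_singleton]; exact Set.subsingleton_singleton.isChain),
        Finset.mem_singleton_self s, by simp, ?_⟩
      rw [ht, Finset.not_nonempty_iff_eq_empty.mp hF]
      simp

theorem stmt5 (k l n : ℕ) (hk : 2 ≤ k) (hl : 2 ≤ l) (hn : k + l - 3 ≤ n) :
    IsGreatest {m | ∃ Q : Finset (Finset (Fin n)),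
      (∀ C ⊆ Q, IsChain (· ⊆ ·) (C : Set (Finset (Fin n))) → C.card < k) ∧
      (∀ A ⊆ Q, IsAntichain (· ⊆ ·) (A : Set (Finset (Fin n))) → A.card < l) ∧
      m = Q.card} ((k - 1) * (l - 1)) := by
  set a := k - 1 with ha
  set b := l - 1 with hb
  have hbn : b ≤ n := by omega
  have han : 1 ≤ a := by omega
  constructor
  · -- construction
    set S : ℕ → ℕ → Finset (Fin n) := fun j i =>
      Finset.univ.filter (fun x : Fin n => x.val = j ∨ (b ≤ x.val ∧ x.val < b + i)) with hS
    have hmemS : ∀ j i (x : Fin n), x ∈ S j i ↔ x.val = j ∨ (b ≤ x.val ∧ x.val < b + i) := by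
      intro j i x; simp [hS]
    have hmono : ∀ j i i', i ≤ i' → S j i ⊆ S j i' := by
      intro j i i' hii x hx
      rw [hmemS] at hx ⊢
      omega
    have hjj : ∀ j i j' i', j < b → j' < b → S j i ⊆ S j' i' → j = j' := by
      intro j i j' i' hj hj' hsub
      have hjn : j < n := lt_of_lt_of_le hj hbn
      have : (⟨j, hjn⟩ : Fin n) ∈ S j i := by rw [hmemS]; left; rfl
      have := hsub this
      rw [hmemS] at this
      simp only [] at this
      omega
    have hne : ∀ j i i', j < b → i < i' → i' < a → S j i ≠ S j i' := by
      intro j i i' hj hii hi' heq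
      have hin : b + i < n := by omega
      have h1 : (⟨b + i, hin⟩ : Fin n) ∈ S j i' := by rw [hmemS]; right; simp; omega
      rw [← heq, hmemS] at h1
      simp only [] at h1
      omega
    refine ⟨((Finset.range b) ×ˢ (Finset.range a)).image (fun p => S p.1 p.2), ?_, ?_, ?_⟩
    · -- chains
      intro C hC hCchain
      rcases C.eq_empty_or_nonempty with rfl | ⟨c0, hc0⟩
      · simp; omega
      obtain ⟨⟨j0, i0⟩, hp0, hc0eq⟩ := Finset.mem_image.mp (hC hc0)
      simp only [Finset.mem_product, Finset.mem_range] at hp0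
      have hCsub : C ⊆ (Finset.range a).image (S j0) := by
        intro c hc
        obtain ⟨⟨j, i⟩, hp, hceq⟩ := Finset.mem_image.mp (hC hc)
        simp only [Finset.mem_product, Finset.mem_range] at hp
        have hcomp : c ⊆ c0 ∨ c0 ⊆ c := by
          by_cases hcc : c = c0
          · exact Or.inl (le_of_eq hcc)
          · exact hCchain hc hc0 hcc
        have : j = j0 := by
          rcases hcomp with h | h
          · exact hjj j i j0 i0 hp.1 hp0.1 (by rw [← hceq, ← hc0eq] at h; exact h)
          · exact (hjj j0 i0 j i hp0.1 hp.1 (by rw [← hceq, ← hc0eq] at h; exact h)).symm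
        subst this
        exact Finset.mem_image.mpr ⟨i, Finset.mem_range.mpr hp.2, hceq⟩
      calc C.card ≤ _ := Finset.card_le_card hCsub
        _ ≤ (Finset.range a).card := Finset.card_image_le
        _ < k := by simp; omega
    · -- antichains
      intro A hA hAanti
      by_contra hcard
      push_neg at hcard
      have hJ : ∀ j i, j < b → (∑ x ∈ (S j i).filter (fun x => x.val < b), x.val) = j := by
        intro j i hj
        have hjn : j < n := lt_of_lt_of_le hj hbn
        have : (S j i).filter (fun x => x.val < b) = {⟨j, hjn⟩} := by
          ext x
          rw [Finset.mem_filter, hmemS, Finset.mem_singleton]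
          constructor
          · rintro ⟨h1 | h1, h2⟩
            · exact Fin.ext h1
            · omega
          · rintro rfl; exact ⟨Or.inl rfl, hj⟩
        rw [this, Finset.sum_singleton]
      set J : Finset (Fin n) → ℕ := fun s => ∑ x ∈ s.filter (fun x => x.val < b), x.val with hJdef
      have hmaps : ∀ x ∈ A, J x ∈ Finset.range b := by
        intro x hx
        obtain ⟨⟨j, i⟩, hp, hxeq⟩ := Finset.mem_image.mp (hA hx)
        simp only [Finset.mem_product, Finset.mem_range] at hp
        rw [Finset.mem_range, ← hxeq, hJdef]
        exact lt_of_eq_of_lt (hJ j i hp.1) hp.1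
      have hlt : (Finset.range b).card < A.card := by simp; omega
      obtain ⟨x, hx, y, hy, hxy, hJeq⟩ :=
        Finset.exists_ne_map_eq_of_card_lt_of_maps_to hlt hmaps
      obtain ⟨⟨j, i⟩, hp, hxeq⟩ := Finset.mem_image.mp (hA hx)
      obtain ⟨⟨j', i'⟩, hp', hyeq⟩ := Finset.mem_image.mp (hA hy)
      simp only [Finset.mem_product, Finset.mem_range] at hp hp'
      have hjj' : j = j' := by
        have e1 : J x = j := by rw [← hxeq, hJdef]; exact hJ j i hp.1
        have e2 : J y = j' := by rw [← hyeq, hJdef]; exact hJ j' i' hp'.1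
        omega
      subst hjj'
      rcases le_total i i' with h | h
      · exact hAanti hx hy hxy (by rw [← hxeq, ← hyeq]; exact hmono j i i' h)
      · exact hAanti hy hx hxy.symm (by rw [← hxeq, ← hyeq]; exact hmono j i' i h)
    · -- cardinality
      rw [Finset.card_image_of_injOn, Finset.card_product]
      · simp [mul_comm]
      · rintro ⟨j, i⟩ hp ⟨j', i'⟩ hp' heq
        simp only [Finset.coe_product, Set.mem_prod, Finset.mem_coe, Finset.mem_range] at hp hp'
        simp only [] at heq
        have hj : j = j' := hjj j i j' i' hp.1 hp'.1 (le_of_eq heq)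
        subst hj
        have hi : i = i' := by
          rcases lt_trichotomy i i' with h | h | h
          · exact absurd heq (hne j i i' hp.1 h hp'.2)
          · exact h
          · exact absurd heq.symm (hne j i' i hp.1 h hp.2)
        simp [hi]
  · -- upper bound
    rintro m ⟨Q, hchain, hanti, rfl⟩
    have hmaps : ∀ s ∈ Q, ht Q s ∈ Finset.Icc 1 (k - 1) := by
      intro s hs
      obtain ⟨C, hCQ, hCchain, hsC, _, hCcard⟩ := ht_chain Q s hs
      have := hchain C hCQ hCchain
      rw [Finset.mem_Icc]
      exact ⟨ht_pos Q s, by omega⟩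
    rw [Finset.card_eq_sum_card_fiberwise hmaps]
    calc ∑ m ∈ Finset.Icc 1 (k-1), (Q.filter (fun s => ht Q s = m)).card
        ≤ ∑ m ∈ Finset.Icc 1 (k-1), (l-1) := by
          apply Finset.sum_le_sum
          intro m _
          have hanti' : IsAntichain (· ⊆ ·)
              ((Q.filter (fun s => ht Q s = m)) : Set (Finset (Fin n))) := by
            intro x hx y hy hxy hsub
            simp only [Finset.coe_filter, Set.mem_setOf_eq] at hx hy
            have : x ⊂ y := ssubset_of_ne_of_subset hxy hsub
            have := ht_lt Q hx.1 this
            omega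
          have := hanti _ (Finset.filter_subset _ _) hanti'
          omega
      _ = (k-1) * (l-1) := by
          rw [Finset.sum_const, Nat.card_Icc, smul_eq_mul]
          simp
end

section
/- Let Q be a finite poset with width at most l − 1 (l ≥ 2), embedded in B_n, and let t ≥ 1. Then the number of t-element chains in Q is at most ∑_{i=1}^{min(t, l−1)} C(l−1, i) · C(i(n+1), t), where C denotes binomial coefficients. -/
open Finset

lemma key (L N t : ℕ) (ht : 1 ≤ t) :
    (L * N).choose t ≤ ∑ i ∈ Finset.Icc 1 t, L.choose i * (i * N).choose t := by
  classical
  set P := Finset.powersetCard t (Finset.univ : Finset (Fin L × Fin N)) with hPdef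
  have hP : P.card = (L * N).choose t := by
    simp [hPdef]
  set 𝒜 := (Finset.univ : Finset (Fin L)).powerset.filter
      (fun B => 1 ≤ B.card ∧ B.card ≤ t) with hAdef
  have hmaps : ∀ S ∈ P, S.image Prod.fst ∈ 𝒜 := by
    intro S hS
    rw [hPdef, Finset.mem_powersetCard] at hS
    rw [hAdef, Finset.mem_filter]
    refine ⟨Finset.mem_powerset.2 (Finset.subset_univ _), ?_, ?_⟩
    · have hSne : S.Nonempty := by rw [← Finset.card_pos, hS.2]; omega
      exact Finset.card_pos.2 (hSne.image _)
    · calc (S.image Prod.fst).card ≤ S.card := Finset.card_image_le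
        _ = t := hS.2
  have hsplit : P.card = ∑ B ∈ 𝒜, (P.filter (fun S => S.image Prod.fst = B)).card :=
    Finset.card_eq_sum_card_fiberwise hmaps
  have hfiber : ∀ B ∈ 𝒜, (P.filter (fun S => S.image Prod.fst = B)).card
      ≤ (B.card * N).choose t := by
    intro B hB
    have hsub : P.filter (fun S => S.image Prod.fst = B)
        ⊆ Finset.powersetCard t (B ×ˢ Finset.univ) := by
      intro S hS
      rw [Finset.mem_filter, hPdef, Finset.mem_powersetCard] at hS
      rw [Finset.mem_powersetCard]
      refine ⟨?_, hS.1.2⟩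
      intro p hp
      rw [Finset.mem_product]
      exact ⟨hS.2 ▸ Finset.mem_image_of_mem Prod.fst hp, Finset.mem_univ _⟩
    calc (P.filter (fun S => S.image Prod.fst = B)).card
        ≤ (Finset.powersetCard t (B ×ˢ Finset.univ)).card := Finset.card_le_card hsub
      _ = (B.card * N).choose t := by
          rw [Finset.card_powersetCard, Finset.card_product, Finset.card_univ,
            Fintype.card_fin]
  have hgroup : ∑ i ∈ Finset.Icc 1 t, L.choose i * (i * N).choose t
      = ∑ B ∈ 𝒜, (B.card * N).choose t := by
    have hm : ∀ B ∈ 𝒜, B.card ∈ Finset.Icc 1 t := by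
      intro B hB
      rw [hAdef, Finset.mem_filter] at hB
      exact Finset.mem_Icc.2 ⟨hB.2.1, hB.2.2⟩
    rw [← Finset.sum_fiberwise_of_maps_to hm (fun B => (B.card * N).choose t)]
    refine Finset.sum_congr rfl fun i hi => ?_
    have hfilt : 𝒜.filter (fun B => B.card = i)
        = Finset.powersetCard i (Finset.univ : Finset (Fin L)) := by
      ext B
      rw [Finset.mem_filter, hAdef, Finset.mem_filter, Finset.mem_powersetCard,
        Finset.mem_powerset]
      rw [Finset.mem_Icc] at hi
      constructor
      · rintro ⟨⟨h1, _, _⟩, h4⟩; exact ⟨h1, h4⟩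
      · rintro ⟨h1, h2⟩; exact ⟨⟨h1, by omega, by omega⟩, h2⟩
    rw [hfilt]
    have hconst : ∑ B ∈ Finset.powersetCard i (Finset.univ : Finset (Fin L)),
        (B.card * N).choose t
        = ∑ _B ∈ Finset.powersetCard i (Finset.univ : Finset (Fin L)), (i * N).choose t :=
      Finset.sum_congr rfl fun B hB => by rw [(Finset.mem_powersetCard.1 hB).2]
    rw [hconst, Finset.sum_const, Finset.card_powersetCard, Finset.card_univ,
      Fintype.card_fin, smul_eq_mul]
  rw [← hP, hgroup, hsplit]
  exact Finset.sum_le_sum hfiber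

def tChainsB (n t : ℕ) (Q : Finset (Finset (Fin n))) : Finset (Finset (Finset (Fin n))) :=
  Q.powerset.filter (fun T => T.card = t ∧ ∀ X ∈ T, ∀ Y ∈ T, X ⊆ Y ∨ Y ⊆ X)

theorem stmt7 (n l t : ℕ) (hl : 2 ≤ l) (ht : 1 ≤ t) (Q : Finset (Finset (Fin n)))
    (hanti : ∀ A ⊆ Q, IsAntichain (· ⊆ ·) (A : Set (Finset (Fin n))) → A.card ≤ l - 1) :
    (tChainsB n t Q).card ≤
      ∑ i ∈ Finset.Icc 1 (min t (l - 1)), (l - 1).choose i * (i * (n + 1)).choose t := by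
  classical
  -- Step 1: |Q| ≤ (l-1)*(n+1) by Mirsky-type level decomposition
  have hQcard : Q.card ≤ (l - 1) * (n + 1) := by
    have hmaps : ∀ X ∈ Q, X.card ∈ Finset.range (n + 1) := by
      intro X _
      rw [Finset.mem_range, Nat.lt_succ_iff]
      simpa using Finset.card_le_card (Finset.subset_univ X)
    have hfib : ∀ j ∈ Finset.range (n + 1),
        (Q.filter (fun X => X.card = j)).card ≤ l - 1 := by
      intro j _
      apply hanti _ (Finset.filter_subset _ _)
      intro X hX Y hY hne hsub
      rw [Finset.mem_coe, Finset.mem_filter] at hX hY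
      exact hne (Finset.eq_of_subset_of_card_le hsub (by omega))
    calc Q.card = ∑ j ∈ Finset.range (n + 1), (Q.filter (fun X => X.card = j)).card :=
          Finset.card_eq_sum_card_fiberwise hmaps
      _ ≤ ∑ _j ∈ Finset.range (n + 1), (l - 1) := Finset.sum_le_sum hfib
      _ = (n + 1) * (l - 1) := by rw [Finset.sum_const, Finset.card_range, smul_eq_mul]
      _ = (l - 1) * (n + 1) := mul_comm _ _
  -- Step 2: t-chains are t-subsets of Q
  have hsub : tChainsB n t Q ⊆ Finset.powersetCard t Q := by
    intro T hT
    rw [tChainsB, Finset.mem_filter, Finset.mem_powerset] at hT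
    exact Finset.mem_powersetCard.2 ⟨hT.1, hT.2.1⟩
  have h1 : (tChainsB n t Q).card ≤ Q.card.choose t := by
    calc (tChainsB n t Q).card ≤ (Finset.powersetCard t Q).card := Finset.card_le_card hsub
      _ = Q.card.choose t := Finset.card_powersetCard _ _
  -- Step 3: combine with key lemma
  have h2 : Q.card.choose t ≤ ((l - 1) * (n + 1)).choose t := Nat.choose_le_choose _ hQcard
  have h3 := key (l - 1) (n + 1) t ht
  -- Step 4: extend the sum range, extra terms vanish
  have h4 : ∑ i ∈ Finset.Icc 1 t, (l - 1).choose i * (i * (n + 1)).choose t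
      = ∑ i ∈ Finset.Icc 1 (min t (l - 1)), (l - 1).choose i * (i * (n + 1)).choose t := by
    symm
    apply Finset.sum_subset
    · intro i hi
      rw [Finset.mem_Icc] at hi ⊢
      omega
    · intro i hi hni
      rw [Finset.mem_Icc] at hi
      rw [Finset.mem_Icc] at hni
      have : l - 1 < i := by omega
      rw [Nat.choose_eq_zero_of_lt this, zero_mul]
  omega
end

section
/- Let P be a finite poset of width s ≥ 2, let l ≥ 2, and set L = min(l−1, s−1). For n ≥ L and 1 ≤ t ≤ n − L + 1, there exists a family Q ⊆ B_n (ordered by inclusion) such that Q is strongly P-free, the width of Q is less than l, and the number of t-chains in Q is exactly L · C(n−L+1, t). Hence the strong Boolean Ramsey–Turán number RT^♯(𝓑; n, P, l, t) is at least L · C(n−L+1, t). -/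
noncomputable def RTsharp (P : Type*) [PartialOrder P] (n l t : ℕ) : ℕ :=
  sSup {m | ∃ Q : Finset (Finset (Fin n)),
    (¬ ∃ f : P → Finset (Fin n), Function.Injective f ∧ (∀ x, f x ∈ Q) ∧
        ∀ x y : P, x ≤ y ↔ f x ⊆ f y) ∧
    (∀ A ⊆ Q, IsAntichain (· ⊆ ·) (A : Set (Finset (Fin n))) → A.card < l) ∧
    m = (tChainsB n t Q).card}

namespace Stmt14

def S (n L i k : ℕ) : Finset (Fin n) :=
  Finset.univ.filter (fun x => x.val = i ∨ (L ≤ x.val ∧ x.val < L + k))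

lemma mem_S {n L i k : ℕ} {x : Fin n} :
    x ∈ S n L i k ↔ (x.val = i ∨ (L ≤ x.val ∧ x.val < L + k)) := by
  simp [S]

lemma S_subset {n L : ℕ} (hLn : L ≤ n) {i j k k' : ℕ} (hi : i < L) (hj : j < L)
    (hk : k ≤ n - L) (hk' : k' ≤ n - L) :
    S n L i k ⊆ S n L j k' ↔ i = j ∧ k ≤ k' := by
  constructor
  · intro h
    have hx : (⟨i, lt_of_lt_of_le hi hLn⟩ : Fin n) ∈ S n L i k := by
      rw [mem_S]; left; rfl
    have hx2 := h hx
    rw [mem_S] at hx2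
    have hij : i = j := by
      rcases hx2 with h1 | h1
      · exact h1
      · simp at h1; omega
    refine ⟨hij, ?_⟩
    by_contra hkk
    push_neg at hkk
    have hy : (⟨L + k', by omega⟩ : Fin n) ∈ S n L i k := by
      rw [mem_S]; simp only [Fin.val_mk]; omega
    have := h hy
    rw [mem_S] at this
    simp only [Fin.val_mk] at this
    omega
  · rintro ⟨rfl, hkk⟩ x hx
    rw [mem_S] at hx ⊢
    omega

lemma S_inj {n L : ℕ} (hLn : L ≤ n) {i j k k' : ℕ} (hi : i < L) (hj : j < L)
    (hk : k ≤ n - L) (hk' : k' ≤ n - L) (h : S n L i k = S n L j k') :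
    i = j ∧ k = k' := by
  have h1 := (S_subset hLn hi hj hk hk').mp h.le
  have h2 := (S_subset hLn hj hi hk' hk).mp h.ge
  omega

def Qset (n L : ℕ) : Finset (Finset (Fin n)) :=
  ((Finset.range L) ×ˢ (Finset.range (n - L + 1))).image fun p => S n L p.1 p.2

lemma mem_Qset {n L : ℕ} {X : Finset (Fin n)} :
    X ∈ Qset n L ↔ ∃ i, i < L ∧ ∃ k, k ≤ n - L ∧ X = S n L i k := by
  simp only [Qset, Finset.mem_image, Finset.mem_product, Finset.mem_range, Prod.exists]
  constructor
  · rintro ⟨i, k, ⟨hi, hk⟩, rfl⟩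
    exact ⟨i, hi, k, by omega, rfl⟩
  · rintro ⟨i, hi, k, hk, rfl⟩
    exact ⟨i, k, ⟨hi, by omega⟩, rfl⟩

-- the "index" of an element of Qset
lemma filter_S {n L i k : ℕ} (hLn : L ≤ n) (hi : i < L) :
    ((S n L i k).filter (fun x => x.val < L)).image Fin.val = {i} := by
  ext a
  simp only [Finset.mem_image, Finset.mem_filter, mem_S, Finset.mem_singleton]
  constructor
  · rintro ⟨x, ⟨hx, hxL⟩, rfl⟩; omega
  · rintro rfl
    exact ⟨⟨a, by omega⟩, ⟨by simp, hi⟩, rfl⟩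

lemma antichain_card_le {n L : ℕ} (hLn : L ≤ n) (A : Finset (Finset (Fin n)))
    (hA : A ⊆ Qset n L) (hanti : IsAntichain (· ⊆ ·) (A : Set (Finset (Fin n)))) :
    A.card ≤ L := by
  have := Finset.card_le_card_of_injOn
    (f := fun X => (((X.filter (fun x => x.val < L)).image Fin.val).sum id))
    (s := A) (t := Finset.range L) ?_ ?_
  · simpa using this
  · intro X hX
    obtain ⟨i, hi, k, hk, rfl⟩ := mem_Qset.mp (hA hX)
    dsimp only
    rw [filter_S hLn hi]
    simpa using hi
  · intro X hX Y hY hf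
    obtain ⟨i, hi, k, hk, rfl⟩ := mem_Qset.mp (hA hX)
    obtain ⟨j, hj, k', hk', rfl⟩ := mem_Qset.mp (hA hY)
    dsimp only at hf
    rw [filter_S hLn hi, filter_S hLn hj] at hf
    simp only [Finset.sum_singleton, id] at hf
    subst hf
    by_contra hne
    rcases le_total k k' with hkk | hkk
    · exact hanti hX hY hne ((S_subset hLn hi hi hk hk').mpr ⟨rfl, hkk⟩)
    · exact hanti hY hX (Ne.symm hne) ((S_subset hLn hi hi hk' hk).mpr ⟨rfl, hkk⟩)

end Stmt14

namespace Stmt14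

lemma tChains_eq {n L t : ℕ} (hLn : L ≤ n) (ht : 1 ≤ t) :
    tChainsB n t (Qset n L) =
      (Finset.range L).biUnion (fun i =>
        ((Finset.range (n - L + 1)).powersetCard t).image
          (fun K => K.image (fun k => S n L i k))) := by
  ext T
  simp only [tChainsB, Finset.mem_filter, Finset.mem_powerset, Finset.mem_biUnion,
    Finset.mem_range, Finset.mem_image, Finset.mem_powersetCard]
  constructor
  · rintro ⟨hTQ, hTcard, hchain⟩
    have hne : T.Nonempty := Finset.card_pos.mp (by omega)
    obtain ⟨X, hX⟩ := hne
    obtain ⟨i, hi, k, hk, rfl⟩ := mem_Qset.mp (hTQ hX)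
    set K := (Finset.range (n - L + 1)).filter (fun k' => S n L i k' ∈ T) with hK
    have hKsub : K ⊆ Finset.range (n - L + 1) := Finset.filter_subset _ _
    have hTK : T = K.image (fun k => S n L i k) := by
      ext Y
      simp only [Finset.mem_image]
      constructor
      · intro hY
        obtain ⟨j, hj, k', hk', rfl⟩ := mem_Qset.mp (hTQ hY)
        have hij : j = i := by
          rcases hchain _ hX _ hY with hc | hc
          · exact ((S_subset hLn hi hj hk hk').mp hc).1.symm
          · exact ((S_subset hLn hj hi hk' hk).mp hc).1
        subst hij
        refine ⟨k', ?_, rfl⟩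
        rw [hK, Finset.mem_filter, Finset.mem_range]
        exact ⟨by omega, hY⟩
      · rintro ⟨k', hk', rfl⟩
        exact (Finset.mem_filter.mp hk').2
    have hinj : Set.InjOn (fun k => S n L i k) K := by
      intro a ha b hb hab
      have ha' := Finset.mem_range.mp (hKsub ha)
      have hb' := Finset.mem_range.mp (hKsub hb)
      exact (S_inj hLn hi hi (by omega) (by omega) hab).2
    refine ⟨i, hi, K, ⟨hKsub, ?_⟩, hTK.symm⟩
    rw [hTK, Finset.card_image_of_injOn hinj] at hTcard
    exact hTcard
  · rintro ⟨i, hi, K, ⟨hKsub, hKcard⟩, rfl⟩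
    have hinj : Set.InjOn (fun k => S n L i k) K := by
      intro a ha b hb hab
      have ha' := Finset.mem_range.mp (hKsub ha)
      have hb' := Finset.mem_range.mp (hKsub hb)
      exact (S_inj hLn hi hi (by omega) (by omega) hab).2
    refine ⟨?_, ?_, ?_⟩
    · intro Y hY
      obtain ⟨k, hk, rfl⟩ := Finset.mem_image.mp hY
      exact mem_Qset.mpr ⟨i, hi, k, by have := Finset.mem_range.mp (hKsub hk); omega, rfl⟩
    · rw [Finset.card_image_of_injOn hinj]; exact hKcard
    · intro X hX Y hY
      obtain ⟨k, hk, rfl⟩ := Finset.mem_image.mp hX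
      obtain ⟨k', hk', rfl⟩ := Finset.mem_image.mp hY
      have ha' := Finset.mem_range.mp (hKsub hk)
      have hb' := Finset.mem_range.mp (hKsub hk')
      rcases le_total k k' with h | h
      · exact Or.inl ((S_subset hLn hi hi (by omega) (by omega)).mpr ⟨rfl, h⟩)
      · exact Or.inr ((S_subset hLn hi hi (by omega) (by omega)).mpr ⟨rfl, h⟩)

lemma tChains_card {n L t : ℕ} (hLn : L ≤ n) (ht : 1 ≤ t) :
    (tChainsB n t (Qset n L)).card = L * (n - L + 1).choose t := by
  rw [tChains_eq hLn ht, Finset.card_biUnion]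
  · have : ∀ i ∈ Finset.range L,
        (((Finset.range (n - L + 1)).powersetCard t).image
          (fun K => K.image (fun k => S n L i k))).card = (n - L + 1).choose t := by
      intro i hi
      have hi' := Finset.mem_range.mp hi
      rw [Finset.card_image_of_injOn, Finset.card_powersetCard, Finset.card_range]
      intro K hK K' hK' hKK
      dsimp only at hKK
      have hKsub := (Finset.mem_powersetCard.mp (by exact_mod_cast hK)).1
      have hKsub' := (Finset.mem_powersetCard.mp (by exact_mod_cast hK')).1
      ext k
      constructor
      · intro hk
        have : S n L i k ∈ K'.image (fun k => S n L i k) := by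
          rw [← hKK]; exact Finset.mem_image_of_mem _ hk
        obtain ⟨k', hk', he⟩ := Finset.mem_image.mp this
        have h1 := Finset.mem_range.mp (hKsub hk)
        have h2 := Finset.mem_range.mp (hKsub' hk')
        have := (S_inj hLn hi' hi' (by omega) (by omega) he.symm).2
        rw [this]; exact hk'
      · intro hk
        have : S n L i k ∈ K.image (fun k => S n L i k) := by
          rw [hKK]; exact Finset.mem_image_of_mem _ hk
        obtain ⟨k', hk', he⟩ := Finset.mem_image.mp this
        have h1 := Finset.mem_range.mp (hKsub' hk)
        have h2 := Finset.mem_range.mp (hKsub hk')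
        have := (S_inj hLn hi' hi' (by omega) (by omega) he.symm).2
        rw [this]; exact hk'
    rw [Finset.sum_congr rfl this, Finset.sum_const, Finset.card_range, smul_eq_mul]
  · intro i hi j hj hij
    simp only [Finset.disjoint_left]
    intro T hTi hTj
    obtain ⟨K, hK, rfl⟩ := Finset.mem_image.mp hTi
    obtain ⟨K', hK', hTe⟩ := Finset.mem_image.mp hTj
    have hKc := Finset.mem_powersetCard.mp hK
    have hKc' := Finset.mem_powersetCard.mp hK'
    have hKne : K.Nonempty := Finset.card_pos.mp (by omega)
    obtain ⟨k, hk⟩ := hKne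
    have : S n L i k ∈ K'.image (fun k => S n L j k) := by
      rw [hTe]; exact Finset.mem_image_of_mem _ hk
    obtain ⟨k', hk', he⟩ := Finset.mem_image.mp this
    have h1 := Finset.mem_range.mp (hKc.1 hk)
    have h2 := Finset.mem_range.mp (hKc'.1 hk')
    have hi' := Finset.mem_range.mp hi
    have hj' := Finset.mem_range.mp hj
    exact hij (S_inj hLn hi' hj' (by omega) (by omega) he.symm).1

end Stmt14

theorem stmt14 {P : Type*} [PartialOrder P] [Fintype P] (s l n t L : ℕ)
    (hs : 2 ≤ s)
    (hwidth : IsGreatest {m | ∃ A : Finset P, IsAntichain (· ≤ ·) (A : Set P) ∧ A.card = m} s)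
    (hl : 2 ≤ l) (hLdef : L = min (l - 1) (s - 1)) (hn : L ≤ n)
    (ht1 : 1 ≤ t) (ht2 : t ≤ n - L + 1) :
    (∃ Q : Finset (Finset (Fin n)),
      (¬ ∃ f : P → Finset (Fin n), Function.Injective f ∧ (∀ x, f x ∈ Q) ∧
          ∀ x y : P, x ≤ y ↔ f x ⊆ f y) ∧
      (∀ A ⊆ Q, IsAntichain (· ⊆ ·) (A : Set (Finset (Fin n))) → A.card < l) ∧
      (tChainsB n t Q).card = L * (n - L + 1).choose t) ∧
    L * (n - L + 1).choose t ≤ RTsharp P n l t := by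
  have hLl : L < l := by omega
  have hLs : L < s := by omega
  have hfree : ¬ ∃ f : P → Finset (Fin n), Function.Injective f ∧
      (∀ x, f x ∈ Stmt14.Qset n L) ∧ ∀ x y : P, x ≤ y ↔ f x ⊆ f y := by
    rintro ⟨f, hfinj, hfQ, hford⟩
    obtain ⟨A, hAanti, hAcard⟩ := hwidth.1
    have hBQ : A.image f ⊆ Stmt14.Qset n L := by
      intro X hX
      obtain ⟨a, _, rfl⟩ := Finset.mem_image.mp hX
      exact hfQ a
    have hBanti : IsAntichain (· ⊆ ·) ((A.image f : Finset (Finset (Fin n))) : Set (Finset (Fin n))) := by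
      intro X hX Y hY hne hsub
      obtain ⟨a, ha, rfl⟩ := Finset.mem_image.mp (by exact_mod_cast hX)
      obtain ⟨b, hb, rfl⟩ := Finset.mem_image.mp (by exact_mod_cast hY)
      have hab : a ≤ b := (hford a b).mpr hsub
      have hne' : a ≠ b := fun h => hne (by rw [h])
      exact hAanti ha hb hne' hab
    have hle := Stmt14.antichain_card_le hn _ hBQ hBanti
    rw [Finset.card_image_of_injective _ hfinj, hAcard] at hle
    omega
  have hanti : ∀ A ⊆ Stmt14.Qset n L, IsAntichain (· ⊆ ·) (A : Set (Finset (Fin n))) → A.card < l :=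
    fun A hA hAa => lt_of_le_of_lt (Stmt14.antichain_card_le hn A hA hAa) hLl
  have hcard := Stmt14.tChains_card (t := t) hn ht1
  refine ⟨⟨Stmt14.Qset n L, hfree, hanti, hcard⟩, ?_⟩
  have hbdd : BddAbove {m | ∃ Q : Finset (Finset (Fin n)),
      (¬ ∃ f : P → Finset (Fin n), Function.Injective f ∧ (∀ x, f x ∈ Q) ∧
          ∀ x y : P, x ≤ y ↔ f x ⊆ f y) ∧
      (∀ A ⊆ Q, IsAntichain (· ⊆ ·) (A : Set (Finset (Fin n))) → A.card < l) ∧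
      m = (tChainsB n t Q).card} := by
    refine ⟨Fintype.card (Finset (Finset (Fin n))), ?_⟩
    rintro m ⟨Q, -, -, rfl⟩
    exact (Finset.card_le_univ _).trans_eq Finset.card_univ
  rw [RTsharp]
  exact le_csSup hbdd ⟨Stmt14.Qset n L, hfree, hanti, hcard.symm⟩
end
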